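/- If j is an even positive integer such that p = 3j + 1 is prime, then R(C_4^{(3)}, K_{2j+1}^{(3)}; 3) > 3j + 1; that is, there is a red/blue coloring of the hyperedges of K_{3j+1}^{(3)} with no red C_4^{(3)} and no blue K_{2j+1}^{(3)}. -/

import Mathlib

/-- `hRamseyOn r S E n` is the Ramsey number `R(H, K_n^{(r)}; r)` where `H` is the
hypergraph with vertex set `S` and hyperedge set `E`. -/
noncomputable def hRamseyOn {V : Type*} [DecidableEq V] (r : ℕ) (S : Finset V)
    (E : Set (Finset V)) (n : ℕ) : ℕ :=
  sInf {p | ∀ c : Finset (Fin p) → Bool,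
    (∃ f : V → Fin p, Set.InjOn f ↑S ∧ ∀ e ∈ E, c (e.image f) = true) ∨
    (∃ g : Fin n → Fin p, Function.Injective g ∧
      ∀ e : Finset (Fin n), e.card = r → c (e.image g) = false)}

/-- The 3-uniform loose cycle `C_4^{(3)}`: two 3-element hyperedges on four vertices
whose intersection has exactly two vertices. -/
def C4 : Set (Finset ℕ) := {({0, 1, 2} : Finset ℕ), ({1, 2, 3} : Finset ℕ)}


/-!
In a finite field `F` with `3j + 1` elements, colour red the triples `{0, x, -x}` and the 3-sets
on which cubing is constant. Every red triple sums to zero (distinct `x, y, z` with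
`x³ = y³ = z³` satisfy `x + y + z = 0`), so two red triples sharing two vertices coincide and
there is no red `C₄`. Every `(2j + 1)`-set `T` contains a red triple: if `0 ∈ T`, the `2j`
nonzero elements of `T` and their negatives cannot be disjoint among the `3j` nonzero elements;
if `0 ∉ T`, the cubes of the elements of `T` are `j`-th roots of unity, of which there are at
most `j`, so three elements of `T` share a cube.

Since `sInf ∅ = 0`, the lower bound also needs the Ramsey number to be finite; a greedy
construction of a blue clique gives `R(C₄, K_n) ≤ n²`.
-/
open Finset

/-- The arrow relation `K_p^{(r)} → (H, K_n^{(r)})`, with `H = (S, E)`; `hRamseyOn r S E n` is the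
least `p` satisfying it. -/
def Arrows {V : Type*} [DecidableEq V] (r : ℕ) (S : Finset V) (E : Set (Finset V)) (n p : ℕ) :
    Prop :=
  ∀ c : Finset (Fin p) → Bool,
    (∃ f : V → Fin p, Set.InjOn f ↑S ∧ ∀ e ∈ E, c (e.image f) = true) ∨
    (∃ g : Fin n → Fin p, Function.Injective g ∧
      ∀ e : Finset (Fin n), e.card = r → c (e.image g) = false)

section Arrows

variable {V : Type*} [DecidableEq V] {r : ℕ} {S : Finset V} {E : Set (Finset V)} {n p q : ℕ}

theorem Arrows.mono (h : Arrows r S E n p) (hpq : p ≤ q) : Arrows r S E n q := by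
  intro c
  let ι : Fin p ↪ Fin q := Fin.castLEEmb hpq
  rcases h (fun e => c (e.map ι)) with ⟨f, hf, hc⟩ | ⟨g, hg, hc⟩
  · exact Or.inl ⟨ι ∘ f, ι.injective.comp_injOn hf, fun e he => by
      simpa only [map_eq_image, image_image] using hc e he⟩
  · exact Or.inr ⟨ι ∘ g, ι.injective.comp hg, fun e he => by
      simpa only [map_eq_image, image_image] using hc e he⟩

theorem lt_hRamseyOn (hp : Arrows r S E n p) (hq : ¬ Arrows r S E n q) :
    q < hRamseyOn r S E n := by
  by_contra! hle
  exact hq ((Nat.sInf_mem (s := {p | Arrows r S E n p}) ⟨p, hp⟩).mono hle)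

end Arrows

section C4

variable {α : Type*} [DecidableEq α]

def C4Free (P : Finset α → Prop) : Prop :=
  ∀ u x y v : α, [u, x, y, v].Nodup → P {u, x, y} → P {x, y, v} → False

theorem exists_C4_iff_not_c4Free (P : Finset α → Prop) :
    (∃ f : ℕ → α, Set.InjOn f ↑(range 4) ∧ ∀ e ∈ C4, P (e.image f)) ↔ ¬ C4Free P := by
  simp only [C4Free, not_forall, not_false_eq_true, exists_prop, and_true]
  constructor
  · rintro ⟨f, hf, hP⟩
    have hne {a b : ℕ} (ha : a < 4) (hb : b < 4) (hab : a ≠ b) : f a ≠ f b :=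
      hf.ne (by simpa using ha) (by simpa using hb) hab
    refine ⟨f 0, f 1, f 2, f 3, ?_, by simpa using hP {0, 1, 2} (by simp [C4]), ?_⟩
    · simp [hne]
    · simpa using hP {1, 2, 3} (by simp [C4])
  · rintro ⟨u, x, y, v, hnd, hu, hv⟩
    refine ⟨fun k => [u, x, y, v].getD k u, ?_, ?_⟩
    · intro a ha b hb hab
      simp only [coe_range, Set.mem_Iio] at ha hb
      interval_cases a <;> interval_cases b <;> simp_all
    · rintro e (rfl | rfl) <;> simpa

variable [Fintype α]

def IsBlue (c : Finset α → Bool) (T : Finset α) : Prop :=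
  ∀ s ⊆ T, s.card = 3 → c s = false

theorem exists_isBlue_insert {c : Finset α → Bool} (hc : C4Free (c · = true)) {T : Finset α}
    (hT : IsBlue c T) (hcard : T.card * T.card < Fintype.card α) :
    ∃ w ∉ T, IsBlue c (insert w T) := by
  set B := T.offDiag.biUnion fun q => {w | w ∉ T ∧ c {w, q.1, q.2} = true}
  have hB : (T ∪ B).card ≤ T.card * T.card := by
    -- the pair `q` together with two different `w` would be a red `C4`
    have hfiber : ∀ q ∈ T.offDiag, #{w | w ∉ T ∧ c {w, q.1, q.2} = true} ≤ 1 := by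
      intro q hq
      refine card_le_one.2 fun u hu v hv => ?_
      by_contra huv
      simp only [mem_filter, mem_univ, true_and] at hu hv
      obtain ⟨ha, hb, hab⟩ := mem_offDiag.1 hq
      refine hc u q.1 q.2 v ?_ hu.2 ?_
      · simp only [List.nodup_cons, List.mem_cons, List.not_mem_nil]
        grind
      · rw [pair_comm, insert_comm]; exact hv.2
    calc (T ∪ B).card ≤ T.card + T.offDiag.card * 1 :=
          (card_union_le _ _).trans
            (Nat.add_le_add_left (card_biUnion_le_card_mul _ _ _ hfiber) _)
      _ ≤ T.card * T.card := by
        rw [offDiag_card, mul_one]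
        have := Nat.le_mul_self T.card
        omega
  obtain ⟨w, -, hw⟩ := exists_mem_notMem_of_card_lt_card (t := univ) (hB.trans_lt hcard)
  refine ⟨w, fun h => hw (mem_union_left _ h), fun s hs h3 => ?_⟩
  by_cases hws : w ∈ s
  · obtain ⟨a, b, hab, hs'⟩ := card_eq_two.1 (show (s.erase w).card = 2 by simp [hws, h3])
    have hsub : {a, b} ⊆ T := hs' ▸ subset_insert_iff.1 hs
    rw [← insert_erase hws, hs']
    by_contra hred
    refine hw (mem_union_right _ (mem_biUnion.2 ⟨(a, b), ?_, ?_⟩))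
    · exact mem_offDiag.2 ⟨hsub (by simp), hsub (by simp), hab⟩
    · exact mem_filter.2 ⟨mem_univ _, fun h => hw (mem_union_left _ h), by simpa using hred⟩
  · exact hT s ((subset_insert_iff_of_notMem hws).1 hs) h3

theorem exists_isBlue_of_mul_self_le {c : Finset α → Bool} (hc : C4Free (c · = true)) :
    ∀ t : ℕ, t * t ≤ Fintype.card α → ∃ T : Finset α, T.card = t ∧ IsBlue c T
  | 0, _ => ⟨∅, card_empty, fun s hs h3 => by simp [subset_empty.1 hs] at h3⟩
  | t + 1, ht => by
    obtain ⟨T, rfl, hT⟩ := exists_isBlue_of_mul_self_le hc t (by nlinarith)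
    obtain ⟨w, hw, hwT⟩ := exists_isBlue_insert hc hT (by nlinarith)
    exact ⟨insert w T, card_insert_of_notMem hw, hwT⟩

end C4

theorem arrows_C4_mul_self (n : ℕ) : Arrows 3 (range 4) C4 n (n * n) := by
  intro c
  by_cases hc : C4Free (c · = true)
  · obtain ⟨T, hT, hblue⟩ := exists_isBlue_of_mul_self_le hc n (by simp)
    let g := T.orderEmbOfFin hT
    refine Or.inr ⟨g, g.injective, fun e he => hblue _ ?_ ?_⟩
    · exact image_subset_iff.2 fun i _ => T.orderEmbOfFin_mem hT i
    · rw [card_image_of_injective _ g.injective, he]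
  · exact Or.inl ((exists_C4_iff_not_c4Free (c · = true)).2 hc)

theorem not_arrows_C4 {α : Type*} [Fintype α] [DecidableEq α] {n : ℕ} (P : Finset α → Prop)
    (hP : C4Free P) (hT : ∀ T : Finset α, T.card = n → ∃ s ⊆ T, s.card = 3 ∧ P s) :
    ¬ Arrows 3 (range 4) C4 n (Fintype.card α) := by
  classical
  intro h
  let e := (Fintype.equivFin α).symm
  let c : Finset (Fin (Fintype.card α)) → Bool := fun s => decide (P (s.map e.toEmbedding))
  rcases h c with hred | ⟨g, hg, hblue⟩
  · refine (exists_C4_iff_not_c4Free (c · = true)).1 hred fun u x y v hnd hu hv => ?_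
    exact hP (e u) (e x) (e y) (e v) (hnd.map e.injective) (by simpa [c] using hu)
      (by simpa [c] using hv)
  · have heg : Function.Injective (e ∘ g) := e.injective.comp hg
    obtain ⟨s, hsT, hs3, hPs⟩ := hT (univ.image (e ∘ g)) (by simp [card_image_of_injective _ heg])
    obtain ⟨s, -, rfl⟩ := subset_image_iff.1 hsT
    rw [card_image_of_injective _ heg] at hs3
    simpa [c, map_eq_image, image_image, hPs] using hblue s hs3

section ZeroSumTriples

variable {R : Type*} [CommRing R] [NoZeroDivisors R]

theorem add_add_eq_zero_of_pow_three_eq {x y z : R} (hxy : x ≠ y) (hxz : x ≠ z) (hyz : y ≠ z)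
    (hy : x ^ 3 = y ^ 3) (hz : x ^ 3 = z ^ 3) : x + y + z = 0 := by
  have hy' : x ^ 2 + x * y + y ^ 2 = 0 := (mul_eq_zero.1
    (by linear_combination hy : (x - y) * (x ^ 2 + x * y + y ^ 2) = 0)).resolve_left
      (sub_ne_zero.2 hxy)
  have hz' : x ^ 2 + x * z + z ^ 2 = 0 := (mul_eq_zero.1
    (by linear_combination hz : (x - z) * (x ^ 2 + x * z + z ^ 2) = 0)).resolve_left
      (sub_ne_zero.2 hxz)
  exact (mul_eq_zero.1 (by linear_combination hy' - hz' : (y - z) * (x + y + z) = 0)).resolve_left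
    (sub_ne_zero.2 hyz)

variable [DecidableEq R]

def IsRedTriple (s : Finset R) : Prop :=
  s.card = 3 ∧ ((∃ x, s = {0, x, -x}) ∨ ∀ a ∈ s, ∀ b ∈ s, a ^ 3 = b ^ 3)

theorem IsRedTriple.sum_eq_zero {s : Finset R} (h : IsRedTriple s) : ∑ a ∈ s, a = 0 := by
  obtain ⟨h3, ⟨x, rfl⟩ | hcube⟩ := h
  · have hx : x ≠ -x := by
      rintro hx
      rw [← hx, pair_eq_singleton] at h3
      exact absurd (card_le_two (a := (0 : R)) (b := x)) (by omega)
    rw [sum_insert_zero (f := fun a : R => a) rfl, sum_pair hx, add_neg_cancel]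
  · obtain ⟨a, b, c, hab, hac, hbc, rfl⟩ := card_eq_three.1 h3
    rw [sum_insert (by simp [hab, hac]), sum_pair hbc, ← add_assoc]
    exact add_add_eq_zero_of_pow_three_eq hab hac hbc (hcube _ (by simp) _ (by simp))
      (hcube _ (by simp) _ (by simp))

theorem c4Free_isRedTriple : C4Free (IsRedTriple (R := R)) := by
  intro u x y v hnd hu hv
  simp only [List.nodup_cons, List.mem_cons, List.not_mem_nil] at hnd
  have hu' := hu.sum_eq_zero
  have hv' := hv.sum_eq_zero
  rw [sum_insert (by grind), sum_pair (by grind)] at hu' hv'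
  grind

end ZeroSumTriples

section FiniteField

variable {F : Type*} [Field F] [Fintype F] [DecidableEq F] {j : ℕ}

theorem exists_isRedTriple_subset_of_zero_mem (hF : Fintype.card F = 3 * j + 1)
    (h2 : (2 : F) ≠ 0) {T : Finset F} (hT : T.card = 2 * j + 1) (h0 : 0 ∈ T) :
    ∃ s ⊆ T, IsRedTriple s := by
  have hj : 0 < j := by have := Fintype.one_lt_card (α := F); omega
  obtain ⟨x, hx⟩ := inter_nonempty_of_card_lt_card_add_card (s := univ.erase 0)
    (t := T.erase 0) (u := (T.erase 0).image Neg.neg) (erase_subset_erase _ (subset_univ _))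
    (image_subset_iff.2 fun x hx =>
      mem_erase.2 ⟨neg_ne_zero.2 (ne_of_mem_erase hx), mem_univ _⟩)
    (by rw [card_image_of_injective _ neg_injective, card_erase_of_mem h0,
      card_erase_of_mem (mem_univ _), card_univ, hF, hT]; omega)
  simp only [mem_inter, mem_erase, mem_image] at hx
  obtain ⟨⟨-, hyT'⟩, y, ⟨hy0, hyT⟩, rfl⟩ := hx
  have hy : y ≠ -y := fun h =>
    hy0 ((mul_eq_zero.1 (by linear_combination h : 2 * y = 0)).resolve_left h2)
  refine ⟨{0, y, -y}, by simp [insert_subset_iff, h0, hyT, hyT'], ?_, Or.inl ⟨y, rfl⟩⟩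
  exact card_eq_three.2 ⟨0, y, -y, hy0.symm, (neg_ne_zero.2 hy0).symm, hy, rfl⟩

theorem exists_isRedTriple_subset_of_zero_notMem (hF : Fintype.card F = 3 * j + 1)
    {T : Finset F} (hT : T.card = 2 * j + 1) (h0 : 0 ∉ T) : ∃ s ⊆ T, IsRedTriple s := by
  have hj : 0 < j := by have := Fintype.one_lt_card (α := F); omega
  -- by Fermat, every nonzero cube is a `j`-th root of unity
  have hcube : ∀ a ∈ T, a ^ 3 ∈ Polynomial.nthRootsFinset j (1 : F) := fun a ha => by
    rw [Polynomial.mem_nthRootsFinset hj, ← pow_mul, ← FiniteField.pow_card_sub_one_eq_one a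
      (ne_of_mem_of_not_mem ha h0), hF, Nat.add_sub_cancel]
  have hroots : (Polynomial.nthRootsFinset j (1 : F)).card ≤ j := by
    rw [Polynomial.nthRootsFinset_def]
    exact (Multiset.toFinset_card_le _).trans (Polynomial.card_nthRoots _ _)
  obtain ⟨y, -, hy⟩ := exists_lt_card_fiber_of_mul_lt_card_of_maps_to hcube (n := 2)
    (by rw [hT]; omega)
  obtain ⟨s, hs, hs3⟩ := exists_subset_card_eq hy
  refine ⟨s, hs.trans (filter_subset _ _), hs3, Or.inr fun a ha b hb => ?_⟩
  rw [(mem_filter.1 (hs ha)).2, (mem_filter.1 (hs hb)).2]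

theorem exists_isRedTriple_subset (hF : Fintype.card F = 3 * j + 1) (h2 : (2 : F) ≠ 0)
    {T : Finset F} (hT : T.card = 2 * j + 1) : ∃ s ⊆ T, s.card = 3 ∧ IsRedTriple s := by
  obtain ⟨s, hs, hred⟩ := if h0 : 0 ∈ T then exists_isRedTriple_subset_of_zero_mem hF h2 hT h0
    else exists_isRedTriple_subset_of_zero_notMem hF hT h0
  exact ⟨s, hs, hred.1, hred⟩

theorem not_arrows_C4_of_card_eq (hF : Fintype.card F = 3 * j + 1) (h2 : (2 : F) ≠ 0) :
    ¬ Arrows 3 (range 4) C4 (2 * j + 1) (3 * j + 1) :=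
  hF ▸ not_arrows_C4 IsRedTriple c4Free_isRedTriple fun _ => exists_isRedTriple_subset hF h2

end FiniteField

theorem stmt_19_general (j : ℕ) (hp : Nat.Prime (3 * j + 1)) :
    3 * j + 1 < hRamseyOn 3 (Finset.range 4) C4 (2 * j + 1) := by
  have h2 : (2 : ZMod (3 * j + 1)) ≠ 0 := by
    intro h
    have := Nat.le_of_dvd two_pos ((ZMod.natCast_eq_zero_iff 2 _).1 (by exact_mod_cast h))
    have := hp.two_le
    omega
  have := Fact.mk hp
  exact lt_hRamseyOn (arrows_C4_mul_self _) (not_arrows_C4_of_card_eq (ZMod.card _) h2)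

theorem stmt_19 (j : ℕ) (hj : 0 < j) (hje : Even j) (hp : Nat.Prime (3 * j + 1)) :
    3 * j + 1 < hRamseyOn 3 (Finset.range 4) C4 (2 * j + 1) :=
  stmt_19_general j hp
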